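/- The system of two equations in real unknowns (U,V): 1/(4 − 2U + U²) + 1/(4 − 2V + V²) = 19/84 and 1/(9 + 2U + U²) + 1/(9 + 2V + V²) = 11/72 has at least four real solutions; besides the two trivial solutions (U,V) = (3,−2) and (U,V) = (−2,3) there exist at least two further real solutions. (Note that all four denominators are strictly positive for every real U,V.) -/
import Mathlib


/-- `(U,V)` is a solution of the reduced System (***) for the configuration
`r₁ = 2, r₂ = 3, a₃ = 1, d₃ = −1, u = 3, v = −2`, where `19/84 = κ₁` and
`11/72 = κ₂`. -/
def SolTriple (p : ℝ × ℝ) : Prop :=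
  1 / (4 - 2 * p.1 + p.1 ^ 2) + 1 / (4 - 2 * p.2 + p.2 ^ 2) = 19 / 84 ∧
  1 / (9 + 2 * p.1 + p.1 ^ 2) + 1 / (9 + 2 * p.2 + p.2 ^ 2) = 11 / 72

private lemma sol_symm {U V : ℝ} (h : SolTriple (U, V)) : SolTriple (V, U) := by
  obtain ⟨h1, h2⟩ := h
  exact ⟨by rw [add_comm] at h1; exact h1, by rw [add_comm] at h2; exact h2⟩

private lemma key_sol {s e : ℝ} (hs3 : 3 ≤ s) (he : 0 < e)
    (hC : 119089*s^3 + 119089*s^2 - 2945633*s + 3989919 = 0)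
    (hE : e^2*(836*s-1202) = 836*s^3+1202*s^2+3400*s-14588) :
    SolTriple ((s+e)/2, (s-e)/2) := by
  set U := (s+e)/2 with hU
  set V := (s-e)/2 with hV
  have hden : (836*s-1202) ≠ 0 := by nlinarith
  have hden2 : ((836*s-1202)^2) ≠ 0 := pow_ne_zero _ hden
  have hd1 : (0:ℝ) < 4 - 2*U + U^2 := by nlinarith [sq_nonneg (U-1)]
  have hd2 : (0:ℝ) < 4 - 2*V + V^2 := by nlinarith [sq_nonneg (V-1)]
  have hd3 : (0:ℝ) < 9 + 2*U + U^2 := by nlinarith [sq_nonneg (U+1)]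
  have hd4 : (0:ℝ) < 9 + 2*V + V^2 := by nlinarith [sq_nonneg (V+1)]
  constructor
  · show 1 / (4 - 2*U + U^2) + 1 / (4 - 2*V + V^2) = 19 / 84
    rw [div_add_div _ _ hd1.ne' hd2.ne', div_eq_div_iff (by positivity) (by norm_num), one_mul, mul_one]
    have key : (836*s-1202)^2 * ((4 - 2*V + V^2 + (4 - 2*U + U^2)) * 84)
        = (836*s-1202)^2 * (19 * ((4 - 2*U + U^2) * (4 - 2*V + V^2))) := by
      rw [hU, hV]
      linear_combination (-41291/4 + 11419/8*e^2 + 53219/2*s - 3971/4*s*e^2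
        - 97793/8*s^2 + 3971/4*s^3) * hE + (171 - 171*s) * hC
    exact mul_left_cancel₀ hden2 key
  · show 1 / (9 + 2*U + U^2) + 1 / (9 + 2*V + V^2) = 11 / 72
    rw [div_add_div _ _ hd3.ne' hd4.ne', div_eq_div_iff (by positivity) (by norm_num), one_mul, mul_one]
    have key : (836*s-1202)^2 * ((9 + 2*V + V^2 + (9 + 2*U + U^2)) * 72)
        = (836*s-1202)^2 * (11 * ((9 + 2*U + U^2) * (9 + 2*V + V^2))) := by
      rw [hU, hV]
      linear_combination (52137/4 + 6611/8*e^2 - 22077/2*s - 2299/4*s*e^2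
        + 16951/8*s^2 + 2299/4*s^3) * hE + (99 - 99*s) * hC
    exact mul_left_cancel₀ hden2 key

/-- Besides the trivial solutions (3,−2) and (−2,3), the reduced system has at least
two further real solutions, hence at least four real solutions in total. -/
theorem reduced_system_at_least_four_solutions :
    SolTriple (3, -2) ∧ SolTriple (-2, 3) ∧
    ∃ p q : ℝ × ℝ, SolTriple p ∧ SolTriple q ∧ p ≠ q ∧
      p ≠ (3, -2) ∧ p ≠ (-2, 3) ∧ q ≠ (3, -2) ∧ q ≠ (-2, 3) := by
  refine ⟨⟨by norm_num [SolTriple], by norm_num [SolTriple]⟩,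
    ⟨by norm_num [SolTriple], by norm_num [SolTriple]⟩, ?_⟩
  -- find a root of the cubic in [3,4] by IVT
  set f : ℝ → ℝ := fun s => 119089*s^3 + 119089*s^2 - 2945633*s + 3989919 with hf
  have hcont : ContinuousOn f (Set.Icc 3 4) := by fun_prop
  have hiv := intermediate_value_Icc (by norm_num : (3:ℝ) ≤ 4) hcont
  have h0 : (0:ℝ) ∈ Set.Icc (f 3) (f 4) := by
    constructor <;> norm_num [hf]
  obtain ⟨s, hsmem, hsroot⟩ := hiv h0
  obtain ⟨hs3, hs4⟩ := hsmem
  have hC : 119089*s^3 + 119089*s^2 - 2945633*s + 3989919 = 0 := hsroot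
  have hden : (0:ℝ) < 836*s-1202 := by nlinarith
  have hnum : (0:ℝ) < 836*s^3+1202*s^2+3400*s-14588 := by nlinarith
  set d : ℝ := (836*s^3+1202*s^2+3400*s-14588) / (836*s-1202) with hd
  have hdpos : 0 < d := div_pos hnum hden
  set e : ℝ := Real.sqrt d with he
  have hepos : 0 < e := Real.sqrt_pos.mpr hdpos
  have he2 : e^2 = d := Real.sq_sqrt hdpos.le
  have hE : e^2*(836*s-1202) = 836*s^3+1202*s^2+3400*s-14588 := by
    rw [he2, hd, div_mul_cancel₀ _ hden.ne']
  have hsol := key_sol hs3 hepos hC hE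
  refine ⟨((s+e)/2, (s-e)/2), ((s-e)/2, (s+e)/2), hsol, sol_symm hsol, ?_, ?_, ?_, ?_, ?_⟩
  · simp only [ne_eq, Prod.mk.injEq, not_and]
    intro h; linarith
  all_goals
    simp only [ne_eq, Prod.mk.injEq, not_and]
    intro h1 h2; nlinarith
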